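/- arXiv:2107.01020 — 4 statements merged into one kernel-verified Lean document; each statement's English description precedes it below -/
import Mathlib

section
/- Let 𝓒 be a chain (totally ordered under inclusion) of subsets of ℕ such that ν_N(A) ≤ ν⁺(A) for all N ∈ ℕ and A ∈ 𝓒. Then ν⁺(⋃𝓒) = sup_{A ∈ 𝓒} ν⁺(A). If moreover 𝓒 ⊆ 𝓕, then ⋃𝓒 ∈ 𝓕 and ν(⋃𝓒) = sup_{A ∈ 𝓒} ν(A). -/
open Filter Set

/-- Partial average ν_N(A) = |A ∩ {1,…,N}| / N. -/
noncomputable def avg (A : Set ℕ) (N : ℕ) : ℝ := ((A ∩ Set.Icc 1 N).ncard : ℝ) / N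

/-- Upper Cesàro limit ν⁺. -/
noncomputable def nuPlus (A : Set ℕ) : ℝ := Filter.limsup (avg A) Filter.atTop

/-- Lower Cesàro limit ν⁻. -/
noncomputable def nuMinus (A : Set ℕ) : ℝ := Filter.liminf (avg A) Filter.atTop

/-- ν(A), defined as ν⁺(A); equals the Cesàro limit whenever it exists. -/
noncomputable def nu (A : Set ℕ) : ℝ := nuPlus A

/-- A ∈ 𝓕 : the Cesàro limit exists (and then equals ν(A) = ν⁺(A)). -/
def memF (A : Set ℕ) : Prop := Filter.Tendsto (avg A) Filter.atTop (nhds (nu A))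

/-- A ∈ 𝓝 : null set, Cesàro limit exists and equals 0. -/
def IsNull (A : Set ℕ) : Prop := Filter.Tendsto (avg A) Filter.atTop (nhds 0)

/-!
Each partial average ν_N(⋃𝓒) only sees the finite set (⋃𝓒) ∩ [1, N], which a chain covers by a
single member A; hence ν_N(⋃𝓒) = ν_N(A) ≤ ν⁺(A) ≤ sup ν⁺, bounding ν⁺(⋃𝓒), while the reverse
inequality is monotonicity. If every A ∈ 𝓒 has a density, then monotonicity of ν⁻ gives
ν⁻(⋃𝓒) ≥ sup ν(A) = ν⁺(⋃𝓒), so ⋃𝓒 has a density as well.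
-/

lemma avg_nonneg (A : Set ℕ) (N : ℕ) : 0 ≤ avg A N := by
  unfold avg; positivity

lemma avg_le_one (A : Set ℕ) (N : ℕ) : avg A N ≤ 1 := by
  rcases Nat.eq_zero_or_pos N with rfl | hN
  · simp [avg]
  · rw [avg, div_le_one (by exact_mod_cast hN)]
    have hcard : (A ∩ Icc 1 N).ncard ≤ (Icc 1 N).ncard :=
      ncard_le_ncard inter_subset_right (finite_Icc _ _)
    rw [← Finset.coe_Icc, ncard_coe_finset, Nat.card_Icc, Nat.add_sub_cancel] at hcard
    exact_mod_cast hcard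

lemma avg_mono {A B : Set ℕ} (h : A ⊆ B) (N : ℕ) : avg A N ≤ avg B N := by
  unfold avg
  gcongr
  exact (finite_Icc 1 N).inter_of_right _

lemma isBoundedUnder_le_avg (A : Set ℕ) : IsBoundedUnder (· ≤ ·) atTop (avg A) :=
  isBoundedUnder_of ⟨1, avg_le_one A⟩

lemma isBoundedUnder_ge_avg (A : Set ℕ) : IsBoundedUnder (· ≥ ·) atTop (avg A) :=
  isBoundedUnder_of ⟨0, avg_nonneg A⟩

lemma nuPlus_le_one (A : Set ℕ) : nuPlus A ≤ 1 :=
  limsup_le_of_le (isBoundedUnder_ge_avg A).isCoboundedUnder_le (.of_forall (avg_le_one A))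

lemma nuMinus_nonneg (A : Set ℕ) : 0 ≤ nuMinus A :=
  le_liminf_of_le (isBoundedUnder_le_avg A).isCoboundedUnder_ge (.of_forall (avg_nonneg A))

lemma nuMinus_le_nuPlus (A : Set ℕ) : nuMinus A ≤ nuPlus A :=
  liminf_le_limsup (isBoundedUnder_le_avg A) (isBoundedUnder_ge_avg A)

lemma nuPlus_mono {A B : Set ℕ} (h : A ⊆ B) : nuPlus A ≤ nuPlus B :=
  limsup_le_limsup (.of_forall (avg_mono h)) (isBoundedUnder_ge_avg A).isCoboundedUnder_le
    (isBoundedUnder_le_avg B)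

lemma nuMinus_mono {A B : Set ℕ} (h : A ⊆ B) : nuMinus A ≤ nuMinus B :=
  liminf_le_liminf (.of_forall (avg_mono h)) (isBoundedUnder_ge_avg A)
    (isBoundedUnder_le_avg B).isCoboundedUnder_ge

lemma nuMinus_eq_nuPlus_of_memF {A : Set ℕ} (hA : memF A) : nuMinus A = nuPlus A :=
  hA.liminf_eq

lemma memF_of_nuPlus_le_nuMinus {A : Set ℕ} (h : nuPlus A ≤ nuMinus A) : memF A :=
  tendsto_of_le_liminf_of_limsup_le h le_rfl (isBoundedUnder_le_avg A) (isBoundedUnder_ge_avg A)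

lemma DirectedOn.exists_avg_sUnion_eq {𝓒 : Set (Set ℕ)} (hdir : DirectedOn (· ⊆ ·) 𝓒)
    (hne : 𝓒.Nonempty) (N : ℕ) : ∃ A ∈ 𝓒, avg (⋃₀ 𝓒) N = avg A N := by
  obtain ⟨A, hA, hcover⟩ := hdir.exists_mem_subset_of_finite_of_subset_sUnion hne
    ((finite_Icc 1 N).inter_of_right (⋃₀ 𝓒)) inter_subset_left
  have hinter : ⋃₀ 𝓒 ∩ Icc 1 N = A ∩ Icc 1 N :=
    Subset.antisymm (subset_inter hcover inter_subset_right)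
      (inter_subset_inter_left _ (subset_sUnion_of_mem hA))
  exact ⟨A, hA, by rw [avg, avg, hinter]⟩

lemma sSup_nuPlus_le_nuPlus_sUnion (𝓒 : Set (Set ℕ)) : sSup (nuPlus '' 𝓒) ≤ nuPlus (⋃₀ 𝓒) :=
  Real.sSup_le (forall_mem_image.2 fun _ hA => nuPlus_mono (subset_sUnion_of_mem hA))
    ((nuMinus_nonneg _).trans (nuMinus_le_nuPlus _))

lemma DirectedOn.nuPlus_sUnion {𝓒 : Set (Set ℕ)} (hdir : DirectedOn (· ⊆ ·) 𝓒)
    (hbd : ∀ A ∈ 𝓒, ∀ N : ℕ, avg A N ≤ nuPlus A) : nuPlus (⋃₀ 𝓒) = sSup (nuPlus '' 𝓒) := by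
  refine le_antisymm ?_ (sSup_nuPlus_le_nuPlus_sUnion 𝓒)
  rcases 𝓒.eq_empty_or_nonempty with rfl | hne
  -- `sSup ∅ = 0` in `ℝ`, which is also `ν⁺ ∅`.
  · simp [nuPlus, show avg ∅ = fun _ => 0 from funext fun N => by simp [avg]]
  have hbdd : BddAbove (nuPlus '' 𝓒) := ⟨1, forall_mem_image.2 fun A _ => nuPlus_le_one A⟩
  have havg (N : ℕ) : avg (⋃₀ 𝓒) N ≤ sSup (nuPlus '' 𝓒) := by
    obtain ⟨A, hA, heq⟩ := hdir.exists_avg_sUnion_eq hne N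
    exact heq ▸ (hbd A hA N).trans (le_csSup hbdd (mem_image_of_mem _ hA))
  exact limsup_le_of_le (isBoundedUnder_ge_avg _).isCoboundedUnder_le (.of_forall havg)

lemma sSup_nuPlus_le_nuMinus_sUnion {𝓒 : Set (Set ℕ)} (hF : ∀ A ∈ 𝓒, memF A) :
    sSup (nuPlus '' 𝓒) ≤ nuMinus (⋃₀ 𝓒) :=
  Real.sSup_le (forall_mem_image.2 fun A hA =>
      nuMinus_eq_nuPlus_of_memF (hF A hA) ▸ nuMinus_mono (subset_sUnion_of_mem hA))
    (nuMinus_nonneg _)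

theorem stmt7 (𝓒 : Set (Set ℕ)) (hchain : IsChain (· ⊆ ·) 𝓒)
    (hbd : ∀ A ∈ 𝓒, ∀ N : ℕ, avg A N ≤ nuPlus A) :
    nuPlus (⋃₀ 𝓒) = sSup (nuPlus '' 𝓒) ∧
    ((∀ A ∈ 𝓒, memF A) → memF (⋃₀ 𝓒) ∧ nu (⋃₀ 𝓒) = sSup (nu '' 𝓒)) := by
  have hsup := hchain.directedOn.nuPlus_sUnion hbd
  refine ⟨hsup, fun hF => ⟨memF_of_nuPlus_le_nuMinus ?_, hsup⟩⟩
  exact hsup ▸ sSup_nuPlus_le_nuMinus_sUnion hF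
end

section
/- If 𝓣 ⊆ 𝒫(ℕ) is a chain under inclusion, then 𝓣_* := 𝓣_∪ ∪ 𝓣_∩ is a chain that is closed under arbitrary unions and arbitrary intersections, where 𝓣_∪ := {⋃𝓒 : 𝓒 ⊆ 𝓣} and 𝓣_∩ := {⋂𝓒 : 𝓒 ⊆ 𝓣}. -/
open Filter Set

section Aux
variable {α : Type*} {𝓣 : Set (Set α)} (hchain : IsChain (· ⊆ ·) 𝓣)

/-- membership in the star family -/
def TStarMem (𝓣 : Set (Set α)) (B : Set α) : Prop :=
  (∃ 𝓒 ⊆ 𝓣, B = ⋃₀ 𝓒) ∨ (∃ 𝓒 ⊆ 𝓣, B = ⋂₀ 𝓒)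

include hchain

lemma chain_tot {D E : Set α} (hD : D ∈ 𝓣) (hE : E ∈ 𝓣) : D ⊆ E ∨ E ⊆ D := by
  rcases eq_or_ne D E with rfl | hne
  · exact Or.inl subset_rfl
  · exact hchain hD hE hne

/-- If D ∈ 𝓣, B ∈ T*, and some point of B is outside D, then D ⊆ B. -/
lemma comp1 {D B : Set α} (hD : D ∈ 𝓣) (hB : TStarMem 𝓣 B)
    {y : α} (hyB : y ∈ B) (hyD : y ∉ D) : D ⊆ B := by
  rcases hB with ⟨𝓔, h𝓔, rfl⟩ | ⟨𝓔, h𝓔, rfl⟩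
  · obtain ⟨E, hE, hyE⟩ := hyB
    rcases chain_tot hchain hD (h𝓔 hE) with h | h
    · exact h.trans (subset_sUnion_of_mem hE)
    · exact absurd (h hyE) hyD
  · intro x hx
    intro E hE
    rcases chain_tot hchain hD (h𝓔 hE) with h | h
    · exact h hx
    · exact absurd (h (hyB E hE)) hyD

/-- If D ∈ 𝓣, B ∈ T*, and some point of D is outside B, then B ⊆ D. -/
lemma comp2 {D B : Set α} (hD : D ∈ 𝓣) (hB : TStarMem 𝓣 B)
    {y : α} (hyD : y ∈ D) (hyB : y ∉ B) : B ⊆ D := by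
  rcases hB with ⟨𝓔, h𝓔, rfl⟩ | ⟨𝓔, h𝓔, rfl⟩
  · intro x hx
    obtain ⟨E, hE, hxE⟩ := hx
    rcases chain_tot hchain hD (h𝓔 hE) with h | h
    · exact absurd ⟨E, hE, h hyD⟩ hyB
    · exact h hxE
  · have : ∃ E ∈ 𝓔, y ∉ E := by
      by_contra h; push_neg at h; exact hyB (Set.mem_sInter.mpr h)
    obtain ⟨E, hE, hyE⟩ := this
    rcases chain_tot hchain hD (h𝓔 hE) with h | h
    · exact absurd (h hyD) hyE
    · exact (sInter_subset_of_mem hE).trans h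

/-- T* is a chain. -/
lemma star_chain {A B : Set α} (hA : TStarMem 𝓣 A) (hB : TStarMem 𝓣 B) :
    A ⊆ B ∨ B ⊆ A := by
  rcases hA with ⟨𝓒, h𝓒, rfl⟩ | ⟨𝓒, h𝓒, rfl⟩
  · by_cases h : ∀ C ∈ 𝓒, C ⊆ B
    · exact Or.inl (sUnion_subset h)
    · push_neg at h
      obtain ⟨C, hC, hCB⟩ := h
      obtain ⟨y, hyC, hyB⟩ := not_subset.mp hCB
      exact Or.inr ((comp2 hchain (h𝓒 hC) hB hyC hyB).trans (subset_sUnion_of_mem hC))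
  · by_cases h : ∀ C ∈ 𝓒, B ⊆ C
    · exact Or.inr (subset_sInter h)
    · push_neg at h
      obtain ⟨C, hC, hCB⟩ := h
      obtain ⟨y, hyB, hyC⟩ := not_subset.mp hCB
      exact Or.inl ((sInter_subset_of_mem hC).trans (comp1 hchain (h𝓒 hC) hB hyB hyC))

/-- Closure under unions. -/
lemma star_sUnion {𝓒 : Set (Set α)} (h𝓒 : ∀ B ∈ 𝓒, TStarMem 𝓣 B) :
    TStarMem 𝓣 (⋃₀ 𝓒) := by
  by_cases hmax : ∃ B ∈ 𝓒, ⋃₀ 𝓒 ⊆ B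
  · obtain ⟨B, hB, hsub⟩ := hmax
    have : ⋃₀ 𝓒 = B := subset_antisymm hsub (subset_sUnion_of_mem hB)
    rw [this]; exact h𝓒 B hB
  · push_neg at hmax
    left
    refine ⟨{D ∈ 𝓣 | ∃ B ∈ 𝓒, D ⊆ B}, sep_subset _ _, ?_⟩
    apply subset_antisymm
    · rintro x ⟨B, hB, hxB⟩
      obtain ⟨y, hy, hyB⟩ := not_subset.mp (hmax B hB)
      obtain ⟨B', hB', hyB'⟩ := hy
      rcases h𝓒 B hB with ⟨𝓓, h𝓓, hBeq⟩ | ⟨𝓓, h𝓓, hBeq⟩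
      · subst hBeq
        obtain ⟨D, hD, hxD⟩ := hxB
        exact ⟨D, ⟨h𝓓 hD, ⋃₀ 𝓓, hB, subset_sUnion_of_mem hD⟩, hxD⟩
      · subst hBeq
        have : ∃ D ∈ 𝓓, y ∉ D := by
          by_contra h; push_neg at h; exact hyB h
        obtain ⟨D, hD, hyD⟩ := this
        have hDB' : D ⊆ B' := comp1 hchain (h𝓓 hD) (h𝓒 B' hB') hyB' hyD
        exact ⟨D, ⟨h𝓓 hD, B', hB', hDB'⟩, hxB D hD⟩
    · exact sUnion_subset fun D hD => hD.2.choose_spec.2.trans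
        (subset_sUnion_of_mem hD.2.choose_spec.1)

/-- Closure under intersections. -/
lemma star_sInter {𝓒 : Set (Set α)} (h𝓒 : ∀ B ∈ 𝓒, TStarMem 𝓣 B) :
    TStarMem 𝓣 (⋂₀ 𝓒) := by
  by_cases hmin : ∃ B ∈ 𝓒, B ⊆ ⋂₀ 𝓒
  · obtain ⟨B, hB, hsub⟩ := hmin
    have : ⋂₀ 𝓒 = B := subset_antisymm (sInter_subset_of_mem hB) hsub
    rw [this]; exact h𝓒 B hB
  · push_neg at hmin
    right
    refine ⟨{D ∈ 𝓣 | ∃ B ∈ 𝓒, B ⊆ D}, sep_subset _ _, ?_⟩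
    apply subset_antisymm
    · exact subset_sInter fun D hD =>
        (sInter_subset_of_mem hD.2.choose_spec.1).trans hD.2.choose_spec.2
    · intro x hx B hB
      obtain ⟨y, hyB, hy⟩ := not_subset.mp (hmin B hB)
      have : ∃ B' ∈ 𝓒, y ∉ B' := by
        by_contra h; push_neg at h; exact hy h
      obtain ⟨B', hB', hyB'⟩ := this
      rcases h𝓒 B hB with ⟨𝓓, h𝓓, hBeq⟩ | ⟨𝓓, h𝓓, hBeq⟩
      · subst hBeq
        obtain ⟨D, hD, hyD⟩ := hyB
        have hBD : B' ⊆ D := comp2 hchain (h𝓓 hD) (h𝓒 B' hB') hyD hyB'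
        exact subset_sUnion_of_mem hD (hx D ⟨h𝓓 hD, B', hB', hBD⟩)
      · subst hBeq
        intro D hD
        exact hx D ⟨h𝓓 hD, ⋂₀ 𝓓, hB, sInter_subset_of_mem hD⟩

end Aux

theorem stmt13 (𝓣 : Set (Set ℕ)) (hchain : IsChain (· ⊆ ·) 𝓣) :
    IsChain (· ⊆ ·) ({B | ∃ 𝓒 ⊆ 𝓣, B = ⋃₀ 𝓒} ∪ {B | ∃ 𝓒 ⊆ 𝓣, B = ⋂₀ 𝓒}) ∧
    (∀ 𝓒 ⊆ ({B | ∃ 𝓒 ⊆ 𝓣, B = ⋃₀ 𝓒} ∪ {B | ∃ 𝓒 ⊆ 𝓣, B = ⋂₀ 𝓒}),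
      ⋃₀ 𝓒 ∈ ({B | ∃ 𝓒 ⊆ 𝓣, B = ⋃₀ 𝓒} ∪ {B | ∃ 𝓒 ⊆ 𝓣, B = ⋂₀ 𝓒})) ∧
    (∀ 𝓒 ⊆ ({B | ∃ 𝓒 ⊆ 𝓣, B = ⋃₀ 𝓒} ∪ {B | ∃ 𝓒 ⊆ 𝓣, B = ⋂₀ 𝓒}),
      ⋂₀ 𝓒 ∈ ({B | ∃ 𝓒 ⊆ 𝓣, B = ⋃₀ 𝓒} ∪ {B | ∃ 𝓒 ⊆ 𝓣, B = ⋂₀ 𝓒})) := by 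
  have hmem : ∀ B, B ∈ ({B | ∃ 𝓒 ⊆ 𝓣, B = ⋃₀ 𝓒} ∪ {B | ∃ 𝓒 ⊆ 𝓣, B = ⋂₀ 𝓒}) ↔
      TStarMem 𝓣 B := fun B => Iff.rfl
  refine ⟨fun A hA B hB _ => ?_, fun 𝓒 h𝓒 => ?_, fun 𝓒 h𝓒 => ?_⟩
  · exact star_chain hchain ((hmem A).mp hA) ((hmem B).mp hB)
  · exact (hmem _).mpr (star_sUnion hchain fun B hB => (hmem B).mp (h𝓒 hB))
  · exact (hmem _).mpr (star_sInter hchain fun B hB => (hmem B).mp (h𝓒 hB))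
end

section
/- Let {A_k}_{k=1}^∞ ⊆ 𝓕 be pairwise disjoint, B_k := ⋃_{i≤k} A_i, and B := ⋃_{i=1}^∞ A_i. Then B ∈ 𝓕 with ν(B) = Σ_{k=1}^∞ ν(A_k) if and only if the convergence ν_N(B_k) → ν(B_k) is uniform in k: for every ε > 0 there exists N_ε such that |ν_N(B_k) − ν(B_k)| < ε for all N ≥ N_ε and all k. -/
open Filter Set

lemma finA (A : Set ℕ) (N : ℕ) : (A ∩ Set.Icc 1 N).Finite :=
  (Set.finite_Icc 1 N).subset inter_subset_right

lemma avg_union {A B : Set ℕ} (h : Disjoint A B) (N : ℕ) :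
    avg (A ∪ B) N = avg A N + avg B N := by
  unfold avg
  rw [Set.union_inter_distrib_right,
    Set.ncard_union_eq (h.mono inter_subset_left inter_subset_left) (finA A N) (finA B N),
    Nat.cast_add, add_div]

lemma memF_of_tendsto {A : Set ℕ} {l : ℝ} (h : Tendsto (avg A) atTop (nhds l)) :
    memF A ∧ nu A = l := by
  have hl : nu A = l := h.limsup_eq
  refine ⟨?_, hl⟩
  unfold memF
  rw [hl]
  exact h

lemma avg_biUnion (A : ℕ → Set ℕ) (hdisj : Pairwise (Function.onFun Disjoint A)) (k N : ℕ) :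
    avg (⋃ i ∈ Set.Iic k, A i) N = ∑ i ∈ Finset.Iic k, avg (A i) N := by
  induction k with
  | zero =>
    have h0 : Set.Iic 0 = ({0} : Set ℕ) := by ext n; simp [Nat.le_zero]
    have h0' : Finset.Iic 0 = ({0} : Finset ℕ) := by ext n; simp [Nat.le_zero]
    simp [h0, h0']
  | succ k ih =>
    have hU : (⋃ i ∈ Set.Iic (k+1), A i) = (⋃ i ∈ Set.Iic k, A i) ∪ A (k+1) := by
      ext n
      simp only [Set.mem_iUnion, Set.mem_union, Set.mem_Iic]
      constructor
      · rintro ⟨i, hi, hni⟩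
        rcases Nat.le_succ_iff.mp hi with h' | h'
        · exact Or.inl ⟨i, h', hni⟩
        · rw [h'] at hni; exact Or.inr hni
      · rintro (⟨i, hi, hni⟩ | hn)
        · exact ⟨i, hi.trans (Nat.le_succ k), hni⟩
        · exact ⟨k+1, le_refl _, hn⟩
    have hd : Disjoint (⋃ i ∈ Set.Iic k, A i) (A (k+1)) := by
      rw [Set.disjoint_left]
      rintro n hn hn2
      simp only [Set.mem_iUnion, Set.mem_Iic] at hn
      obtain ⟨i, hi, hni⟩ := hn
      exact Set.disjoint_left.mp (hdisj (by omega : i ≠ k+1)) hni hn2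
    have hI : Finset.Iic (k+1) = insert (k+1) (Finset.Iic k) := by
      ext x; simp; omega
    rw [hU, avg_union hd, ih, hI, Finset.sum_insert (by simp)]
    ring

lemma exists_k (A : ℕ → Set ℕ) (K N : ℕ) :
    ∃ k ≥ K, (⋃ i, A i) ∩ Set.Icc 1 N = (⋃ i ∈ Set.Iic k, A i) ∩ Set.Icc 1 N := by
  classical
  set f : ℕ → ℕ := fun n => if h : ∃ i, n ∈ A i then h.choose else 0 with hf
  refine ⟨max K ((Finset.Icc 1 N).sup f), le_max_left _ _, ?_⟩
  ext n
  simp only [Set.mem_inter_iff, Set.mem_iUnion, Set.mem_Iic]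
  constructor
  · rintro ⟨⟨i, hi⟩, hn⟩
    have hex : ∃ i, n ∈ A i := ⟨i, hi⟩
    refine ⟨⟨f n, ?_, ?_⟩, hn⟩
    · have : f n ≤ (Finset.Icc 1 N).sup f :=
        Finset.le_sup (by simpa [Finset.mem_Icc] using hn)
      exact this.trans (le_max_right _ _)
    · simp only [hf, dif_pos hex]; exact hex.choose_spec
  · rintro ⟨⟨i, _, hi⟩, hn⟩
    exact ⟨⟨i, hi⟩, hn⟩

theorem stmt15 (A : ℕ → Set ℕ) (hdisj : Pairwise (Function.onFun Disjoint A))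
    (hF : ∀ k, memF (A k)) :
    (memF (⋃ i, A i) ∧ nu (⋃ i, A i) = ∑' k, nu (A k)) ↔
      (∀ ε > (0 : ℝ), ∃ Nε : ℕ, ∀ N ≥ Nε, ∀ k : ℕ,
        |avg (⋃ i ∈ Set.Iic k, A i) N - nu (⋃ i ∈ Set.Iic k, A i)| < ε) := by
  classical
  have hnonneg : ∀ i, 0 ≤ nu (A i) := fun i =>
    ge_of_tendsto (hF i) (Filter.Eventually.of_forall (avg_nonneg _))
  have hBkt : ∀ k, Tendsto (avg (⋃ i ∈ Set.Iic k, A i)) atTop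
      (nhds (∑ i ∈ Finset.Iic k, nu (A i))) := by
    intro k
    have heq : ∀ N, avg (⋃ i ∈ Set.Iic k, A i) N = ∑ i ∈ Finset.Iic k, avg (A i) N :=
      avg_biUnion A hdisj k
    refine Tendsto.congr (fun N => (heq N).symm) ?_
    exact tendsto_finset_sum _ (fun i _ => hF i)
  have hBkF : ∀ k, memF (⋃ i ∈ Set.Iic k, A i) ∧
      nu (⋃ i ∈ Set.Iic k, A i) = ∑ i ∈ Finset.Iic k, nu (A i) :=
    fun k => memF_of_tendsto (hBkt k)
  have hBkle1 : ∀ k, (∑ i ∈ Finset.Iic k, nu (A i)) ≤ 1 := fun k =>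
    le_of_tendsto (hBkt k) (Filter.Eventually.of_forall fun N => avg_le_one _ N)
  have hsum : Summable (fun k => nu (A k)) := by
    apply summable_of_sum_range_le hnonneg
    intro n
    calc ∑ i ∈ Finset.range n, nu (A i)
        ≤ ∑ i ∈ Finset.Iic n, nu (A i) := by
          apply Finset.sum_le_sum_of_subset_of_nonneg
          · intro x hx; simp only [Finset.mem_range] at hx; simp only [Finset.mem_Iic]; omega
          · exact fun i _ _ => hnonneg i
      _ ≤ 1 := hBkle1 n
  have hk_le_L : ∀ k, ∑ i ∈ Finset.Iic k, nu (A i) ≤ ∑' k, nu (A k) := fun k =>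
    Summable.sum_le_tsum _ (fun i _ => hnonneg i) hsum
  have hmono_sum : ∀ {j k : ℕ}, j ≤ k →
      ∑ i ∈ Finset.Iic j, nu (A i) ≤ ∑ i ∈ Finset.Iic k, nu (A i) := by
    intro j k hjk
    exact Finset.sum_le_sum_of_subset_of_nonneg (Finset.Iic_subset_Iic.mpr hjk)
      (fun i _ _ => hnonneg i)
  have htendL : Tendsto (fun k => ∑ i ∈ Finset.Iic k, nu (A i)) atTop
      (nhds (∑' k, nu (A k))) := by
    have h1 := hsum.hasSum.tendsto_sum_nat
    have h2 : (fun k => ∑ i ∈ Finset.Iic k, nu (A i))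
        = (fun n => ∑ i ∈ Finset.range n, nu (A i)) ∘ (fun k => k + 1) := by
      funext k
      simp only [Function.comp]
      congr 1
      ext x; simp [Nat.lt_succ_iff]
    rw [h2]
    exact h1.comp (tendsto_add_atTop_nat 1)
  have hsubk : ∀ {j k : ℕ}, j ≤ k → (⋃ i ∈ Set.Iic j, A i) ⊆ (⋃ i ∈ Set.Iic k, A i) := by
    intro j k hjk
    exact Set.biUnion_subset_biUnion_left (Set.Iic_subset_Iic.mpr hjk)
  have hsubB : ∀ k, (⋃ i ∈ Set.Iic k, A i) ⊆ ⋃ i, A i := by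
    intro k n hn
    simp only [Set.mem_iUnion] at hn ⊢
    exact ⟨hn.choose, hn.choose_spec.2⟩
  constructor
  · rintro ⟨hBF, hBnu⟩ ε hε
    obtain ⟨K, hK⟩ := (htendL.eventually
      (eventually_gt_nhds (show (∑' k, nu (A k)) - ε/3 < ∑' k, nu (A k) by linarith))).exists
    have hBF' : Tendsto (avg (⋃ i, A i)) atTop (nhds (∑' k, nu (A k))) := hBnu ▸ hBF
    obtain ⟨N1, hN1⟩ := Metric.tendsto_atTop.mp hBF' (ε/3) (by linarith)
    obtain ⟨N2, hN2⟩ := Metric.tendsto_atTop.mp (hBkt K) (ε/3) (by linarith)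
    have hfin : ∀ k, ∃ Nk : ℕ, ∀ N ≥ Nk,
        |avg (⋃ i ∈ Set.Iic k, A i) N - ∑ i ∈ Finset.Iic k, nu (A i)| < ε := by
      intro k
      obtain ⟨Nk, hNk⟩ := Metric.tendsto_atTop.mp (hBkt k) ε hε
      exact ⟨Nk, fun N hN => by simpa [Real.dist_eq] using hNk N hN⟩
    choose Nf hNf using hfin
    refine ⟨max (max N1 N2) ((Finset.Iic K).sup Nf), fun N hN k => ?_⟩
    rw [(hBkF k).2]
    rcases le_or_gt k K with hkK | hkK
    · exact hNf k N (le_trans (le_trans (Finset.le_sup (Finset.mem_Iic.mpr hkK))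
        (le_max_right _ _)) hN)
    · have h1 : |avg (⋃ i, A i) N - ∑' k, nu (A k)| < ε/3 := by
        simpa [Real.dist_eq] using hN1 N (le_trans (le_trans (le_max_left _ _) (le_max_left _ _)) hN)
      have h2 : |avg (⋃ i ∈ Set.Iic K, A i) N - ∑ i ∈ Finset.Iic K, nu (A i)| < ε/3 := by
        simpa [Real.dist_eq] using hN2 N (le_trans (le_trans (le_max_right _ _) (le_max_left _ _)) hN)
      have hKk := hmono_sum hkK.le
      have hmA : avg (⋃ i ∈ Set.Iic K, A i) N ≤ avg (⋃ i ∈ Set.Iic k, A i) N :=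
        avg_mono (hsubk hkK.le) N
      have hmB : avg (⋃ i ∈ Set.Iic k, A i) N ≤ avg (⋃ i, A i) N :=
        avg_mono (hsubB k) N
      have hkL := hk_le_L k
      rw [abs_lt] at h1 h2 ⊢
      constructor <;> linarith
  · intro hU
    have hBtend : Tendsto (avg (⋃ i, A i)) atTop (nhds (∑' k, nu (A k))) := by
      rw [Metric.tendsto_atTop]
      intro ε hε
      obtain ⟨K, hK⟩ := (htendL.eventually
        (eventually_gt_nhds (show (∑' k, nu (A k)) - ε/2 < ∑' k, nu (A k) by linarith))).exists
      obtain ⟨Nε, hNε⟩ := hU (ε/2) (by linarith)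
      refine ⟨Nε, fun N hN => ?_⟩
      obtain ⟨k, hkK, hEq⟩ := exists_k A K N
      have hAvgEq : avg (⋃ i, A i) N = avg (⋃ i ∈ Set.Iic k, A i) N := by
        unfold avg; rw [hEq]
      have h1 := hNε N hN k
      rw [(hBkF k).2] at h1
      have hKk := hmono_sum hkK
      have hkL := hk_le_L k
      rw [Real.dist_eq, hAvgEq]
      rw [abs_lt] at h1 ⊢
      constructor <;> linarith
    exact memF_of_tendsto hBtend
end

section
/- For every A ⊆ ℕ there exists a decomposition A = A′ ∪ F into disjoint sets with F null (lim_{N→∞} ν_N(F) = 0), ν⁺(A′) = ν⁺(A), and ν_N(A′) ≤ ν⁺(A′) for all N ∈ ℕ. Moreover if A ∈ 𝓕 then A′ ∈ 𝓕. -/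
open Filter Set

namespace Stmt16Aux

open Classical in
/-- Greedy count of accepted elements up to `n`. -/
noncomputable def cnt (A : Set ℕ) (α : ℝ) : ℕ → ℕ
  | 0 => 0
  | n + 1 =>
      if (n + 1 : ℕ) ∈ A ∧ ((cnt A α n : ℝ) + 1) ≤ α * (n + 1) then cnt A α n + 1
      else cnt A α n

/-- The greedily accepted set. -/
def Aset (A : Set ℕ) (α : ℝ) : Set ℕ :=
  {n | (n = 0 ∧ 0 ∈ A) ∨
    (0 < n ∧ n ∈ A ∧ ((cnt A α (n - 1) : ℝ) + 1) ≤ α * n)}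

variable {A : Set ℕ} {α : ℝ}

open Classical

lemma mem_Aset_succ (N : ℕ) :
    (N + 1 : ℕ) ∈ Aset A α ↔ ((N + 1 : ℕ) ∈ A ∧ ((cnt A α N : ℝ) + 1) ≤ α * (N + 1)) := by
  simp [Aset]

lemma Aset_subset : Aset A α ⊆ A := by
  intro n hn
  rcases hn with ⟨h0, hA⟩ | ⟨_, hA, _⟩
  · simpa [h0] using hA
  · exact hA

lemma finite_inter (S : Set ℕ) (N : ℕ) : (S ∩ Set.Icc 1 N).Finite :=
  (Set.finite_Icc 1 N).inter_of_right _

lemma ncard_succ (S : Set ℕ) (N : ℕ) :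
    (S ∩ Set.Icc 1 (N + 1)).ncard
      = (S ∩ Set.Icc 1 N).ncard + (if (N + 1 : ℕ) ∈ S then 1 else 0) := by
  by_cases h : (N + 1 : ℕ) ∈ S
  · have he : S ∩ Set.Icc 1 (N + 1) = insert (N + 1) (S ∩ Set.Icc 1 N) := by
      ext n
      simp only [Set.mem_inter_iff, Set.mem_Icc, Set.mem_insert_iff]
      constructor
      · rintro ⟨hS, h1, hN⟩
        rcases eq_or_lt_of_le hN with rfl | hlt
        · exact Or.inl rfl
        · exact Or.inr ⟨hS, h1, by omega⟩
      · rintro (rfl | ⟨hS, h1, hN⟩)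
        · exact ⟨h, by omega, le_rfl⟩
        · exact ⟨hS, h1, by omega⟩
    rw [he, Set.ncard_insert_of_notMem (by simp) (finite_inter S N)]
    simp [h]
  · have he : S ∩ Set.Icc 1 (N + 1) = S ∩ Set.Icc 1 N := by
      ext n
      simp only [Set.mem_inter_iff, Set.mem_Icc]
      constructor
      · rintro ⟨hS, h1, hN⟩
        refine ⟨hS, h1, ?_⟩
        rcases eq_or_lt_of_le hN with rfl | hlt
        · exact absurd hS h
        · omega
      · rintro ⟨hS, h1, hN⟩
        exact ⟨hS, h1, by omega⟩
    rw [he]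
    simp [h]

lemma card_Aset (N : ℕ) : ((Aset A α) ∩ Set.Icc 1 N).ncard = cnt A α N := by
  induction N with
  | zero => simp [cnt]
  | succ N ih =>
    rw [ncard_succ, ih, cnt]
    by_cases h : ((N + 1 : ℕ) ∈ A ∧ ((cnt A α N : ℝ) + 1) ≤ α * (N + 1))
    · rw [if_pos h, if_pos ((mem_Aset_succ N).2 h)]
    · rw [if_neg h, if_neg (fun hm => h ((mem_Aset_succ N).1 hm))]; omega

lemma count_add (N : ℕ) :
    ((A ∩ Set.Icc 1 N).ncard : ℝ)
      = (cnt A α N : ℝ) + (((A \ Aset A α) ∩ Set.Icc 1 N).ncard : ℝ) := by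
  induction N with
  | zero => simp [cnt]
  | succ N ih =>
    rw [ncard_succ A, ncard_succ (A \ Aset A α)]
    push_cast
    rw [ih, ← card_Aset (A := A) (α := α) (N + 1), ncard_succ (Aset A α), card_Aset]
    by_cases hA : (N + 1 : ℕ) ∈ A
    · by_cases hs : (N + 1 : ℕ) ∈ Aset A α
      · have : (N + 1 : ℕ) ∉ A \ Aset A α := fun h => h.2 hs
        simp [hA, hs, this]
        ring
      · have : (N + 1 : ℕ) ∈ A \ Aset A α := ⟨hA, hs⟩
        simp [hA, hs, this]
        ring
    · have h1 : (N + 1 : ℕ) ∉ Aset A α := fun h => hA (Aset_subset h)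
      have h2 : (N + 1 : ℕ) ∉ A \ Aset A α := fun h => hA h.1
      simp [hA, h1, h2]

lemma avg_nonneg (S : Set ℕ) (N : ℕ) : 0 ≤ avg S N := by
  unfold avg; positivity

lemma avg_le_one (S : Set ℕ) (N : ℕ) : avg S N ≤ 1 := by
  unfold avg
  rcases Nat.eq_zero_or_pos N with rfl | hN
  · simp
  · rw [div_le_one (by exact_mod_cast hN)]
    have h1 : (S ∩ Set.Icc 1 N).ncard ≤ (Set.Icc 1 N).ncard :=
      Set.ncard_le_ncard Set.inter_subset_right (Set.finite_Icc 1 N)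
    have h2 : (Set.Icc 1 N).ncard = N := by
      rw [← Finset.coe_Icc, Set.ncard_coe_finset, Nat.card_Icc]; omega
    exact_mod_cast h1.trans_eq h2

lemma avg_bdd (S : Set ℕ) : IsBoundedUnder (· ≤ ·) atTop (avg S) :=
  isBoundedUnder_of ⟨1, fun n => avg_le_one S n⟩

lemma avg_cobdd (S : Set ℕ) : IsCoboundedUnder (· ≤ ·) atTop (avg S) :=
  (isBoundedUnder_of ⟨0, fun n => avg_nonneg S n⟩ :
    IsBoundedUnder (· ≥ ·) atTop (avg S)).isCoboundedUnder_le

lemma nuPlus_nonneg (S : Set ℕ) : 0 ≤ nuPlus S :=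
  le_limsup_of_frequently_le (Frequently.of_forall fun n => avg_nonneg S n) (avg_bdd S)

lemma cnt_le (hα : 0 ≤ α) (N : ℕ) : (cnt A α N : ℝ) ≤ α * N := by
  induction N with
  | zero => simp [cnt]
  | succ N ih =>
    rw [cnt]
    by_cases h : ((N + 1 : ℕ) ∈ A ∧ ((cnt A α N : ℝ) + 1) ≤ α * (N + 1))
    · rw [if_pos h]; push_cast; exact h.2
    · rw [if_neg h]
      have : α * N ≤ α * (N + 1) := by nlinarith
      push_cast
      push_cast at ih this
      linarith

end Stmt16Aux

theorem stmt16 (A : Set ℕ) :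
    ∃ A' F : Set ℕ, Disjoint A' F ∧ A = A' ∪ F ∧ IsNull F ∧
      nuPlus A' = nuPlus A ∧ (∀ N : ℕ, avg A' N ≤ nuPlus A') ∧
      (memF A → memF A') := by
  classical
  have hα0 : 0 ≤ nuPlus A := Stmt16Aux.nuPlus_nonneg A
  set α : ℝ := nuPlus A with hαdef
  set A' : Set ℕ := Stmt16Aux.Aset A α with hA'def
  set F : Set ℕ := A \ A' with hFdef
  have hsub : A' ⊆ A := Stmt16Aux.Aset_subset
  have havgA' : ∀ N, avg A' N = (Stmt16Aux.cnt A α N : ℝ) / N := by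
    intro N
    unfold avg
    rw [hA'def, Stmt16Aux.card_Aset]
  have havg : ∀ N, avg A N = avg A' N + avg F N := by
    intro N
    unfold avg
    rw [hFdef, hA'def, Stmt16Aux.count_add (A := A) (α := α) N, add_div,
      Stmt16Aux.card_Aset]
  have hbound : ∀ N, avg A' N ≤ α := by
    intro N
    rcases Nat.eq_zero_or_pos N with rfl | hN
    · rw [havgA']
      simpa using hα0
    · rw [havgA', div_le_iff₀ (by exact_mod_cast hN : (0:ℝ) < N)]
      exact Stmt16Aux.cnt_le hα0 N
  -- F is null
  have hnull : IsNull F := by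
    rw [IsNull, Metric.tendsto_atTop]
    intro ε hε
    have hlt : Filter.limsup (avg A) Filter.atTop < α + ε / 4 := by
      have : α < α + ε / 4 := by linarith
      exact this
    obtain ⟨N₀, hN₀⟩ := Filter.eventually_atTop.1
      (eventually_lt_of_limsup_lt hlt (Stmt16Aux.avg_bdd A))
    have key : ∀ N, N₀ ≤ N →
        ((F ∩ Set.Icc 1 N).ncard : ℝ) ≤ max (N₀ : ℝ) (ε / 4 * N + 1) := by
      intro N
      induction N with
      | zero =>
        intro h
        have : (F ∩ Set.Icc 1 0).ncard = 0 := by simp [Set.Icc_eq_empty_of_lt]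
        rw [this]
        have : (0:ℝ) ≤ max (N₀ : ℝ) (ε / 4 * 0 + 1) := le_max_of_le_right (by linarith)
        simpa using this
      | succ N ih =>
        intro hle
        rcases Nat.lt_or_ge N N₀ with hcase | hcase
        · -- N₀ = N + 1, crude bound by N₀
          have hN0 : N₀ = N + 1 := by omega
          have h1 : (F ∩ Set.Icc 1 (N+1)).ncard ≤ (Set.Icc 1 (N+1)).ncard :=
            Set.ncard_le_ncard Set.inter_subset_right (Set.finite_Icc 1 (N+1))
          have h2 : (Set.Icc 1 (N+1)).ncard = N + 1 := by
            rw [← Finset.coe_Icc, Set.ncard_coe_finset, Nat.card_Icc]; omega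
          refine le_max_of_le_left ?_
          rw [hN0]
          exact_mod_cast h1.trans_eq h2
        · have ihN := ih hcase
          rw [Stmt16Aux.ncard_succ]
          by_cases hmem : (N + 1 : ℕ) ∈ F
          · -- rejection step
            have hA1 : (N + 1 : ℕ) ∈ A := hmem.1
            have hA2 : (N + 1 : ℕ) ∉ A' := hmem.2
            have hrej : ¬ ((Stmt16Aux.cnt A α N : ℝ) + 1) ≤ α * (N + 1) := by
              intro hc
              exact hA2 ((Stmt16Aux.mem_Aset_succ N).2 ⟨hA1, hc⟩)
            push_neg at hrej
            have hcnt : Stmt16Aux.cnt A α (N + 1) = Stmt16Aux.cnt A α N := by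
              rw [Stmt16Aux.cnt, if_neg (fun hc => absurd hc.2 (not_le.2 hrej))]
            have hca : ((A ∩ Set.Icc 1 (N+1)).ncard : ℝ)
                = (Stmt16Aux.cnt A α (N+1) : ℝ) + ((F ∩ Set.Icc 1 (N+1)).ncard : ℝ) :=
              Stmt16Aux.count_add (N + 1)
            have hav : avg A (N+1) < α + ε / 4 := hN₀ (N+1) (by omega)
            have hpos : (0:ℝ) < (N:ℝ) + 1 := by positivity
            have hcard : ((A ∩ Set.Icc 1 (N+1)).ncard : ℝ) = avg A (N+1) * ((N:ℝ)+1) := by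
              unfold avg
              push_cast
              field_simp
            have hfc : ((F ∩ Set.Icc 1 (N+1)).ncard : ℝ)
                < ε / 4 * ((N:ℝ)+1) + 1 := by
              have h1 : ((F ∩ Set.Icc 1 (N+1)).ncard : ℝ)
                  = avg A (N+1) * ((N:ℝ)+1) - (Stmt16Aux.cnt A α N : ℝ) := by
                rw [← hcard, hca, hcnt]; ring
              have h2 : α * ((N:ℝ)+1) - 1 < (Stmt16Aux.cnt A α N : ℝ) := by
                push_cast at hrej ⊢
                linarith
              rw [h1]
              nlinarith
            rw [Stmt16Aux.ncard_succ] at hfc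
            refine le_max_of_le_right ?_
            push_cast at hfc ⊢
            linarith
          · rw [if_neg hmem]
            refine le_trans (by simpa using ihN) (max_le_max le_rfl ?_)
            have : (0:ℝ) ≤ ε / 4 := by linarith
            push_cast
            nlinarith
    -- choose threshold
    obtain ⟨M, hM⟩ := exists_nat_gt (max ((N₀ : ℝ) * 2 / ε) (8 / ε))
    refine ⟨max M (max N₀ 1), fun n hn => ?_⟩
    have hn1 : 1 ≤ n := le_trans (le_max_of_le_right (le_max_right _ _)) hn
    have hnN₀ : N₀ ≤ n := le_trans (le_max_of_le_right (le_max_left _ _)) hn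
    have hnM : (M : ℝ) ≤ (n : ℝ) := by exact_mod_cast le_trans (le_max_left _ _) hn
    have hnpos : (0:ℝ) < (n:ℝ) := by exact_mod_cast hn1
    have hb1 : (N₀ : ℝ) * 2 / ε < (n : ℝ) := lt_of_le_of_lt (le_max_left _ _) (lt_of_lt_of_le hM hnM)
    have hb2 : 8 / ε < (n : ℝ) := lt_of_le_of_lt (le_max_right _ _) (lt_of_lt_of_le hM hnM)
    have hkey := key n hnN₀
    have hmax : max (N₀ : ℝ) (ε / 4 * n + 1) < ε * n := by
      refine max_lt ?_ ?_
      · rw [div_lt_iff₀ hε] at hb1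
        linarith
      · rw [div_lt_iff₀ hε] at hb2
        nlinarith
    have hlt2 : ((F ∩ Set.Icc 1 n).ncard : ℝ) / n < ε := by
      rw [div_lt_iff₀ hnpos]
      calc ((F ∩ Set.Icc 1 n).ncard : ℝ) ≤ _ := hkey
        _ < ε * n := hmax
    have : avg F n < ε := by
      unfold avg
      exact hlt2
    rw [Real.dist_eq]
    have h0 : 0 ≤ avg F n := Stmt16Aux.avg_nonneg F n
    rw [abs_of_nonneg (by simpa using h0)]
    simpa using this
  -- limsup equality
  have hle : nuPlus A' ≤ α := by
    have h1 : Filter.limsup (avg A') Filter.atTop ≤ Filter.limsup (avg A) Filter.atTop := by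
      refine limsup_le_limsup (Eventually.of_forall fun n => ?_)
        (Stmt16Aux.avg_cobdd A') (Stmt16Aux.avg_bdd A)
      have := Stmt16Aux.avg_nonneg F n
      have h2 := havg n
      linarith
    exact h1
  have hge : α ≤ nuPlus A' := by
    refine le_of_forall_pos_le_add fun ε hε => ?_
    have hevF : ∀ᶠ n in Filter.atTop, avg F n < ε :=
      hnull.eventually (eventually_lt_nhds hε)
    have hev : ∀ᶠ n in Filter.atTop, avg A n ≤ avg A' n + ε := by
      filter_upwards [hevF] with n hFn
      have h2 := havg n
      linarith
    have hbddsum : Filter.IsBoundedUnder (· ≤ ·) Filter.atTop (fun n => avg A' n + ε) :=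
      isBoundedUnder_of ⟨1 + ε, fun n => by
        have := Stmt16Aux.avg_le_one A' n
        linarith⟩
    have h3 : Filter.limsup (avg A) Filter.atTop
        ≤ Filter.limsup (fun n => avg A' n + ε) Filter.atTop :=
      limsup_le_limsup hev (Stmt16Aux.avg_cobdd A) hbddsum
    rw [limsup_add_const Filter.atTop (avg A') ε (Stmt16Aux.avg_bdd A')
      (Stmt16Aux.avg_cobdd A')] at h3
    exact h3
  have heq : nuPlus A' = α := le_antisymm hle hge
  refine ⟨A', F, disjoint_sdiff_right, (Set.union_diff_cancel hsub).symm, hnull, heq, ?_, ?_⟩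
  · intro N
    rw [heq]
    exact hbound N
  · intro hAF
    have hfun : avg A' = fun n => avg A n - avg F n := funext fun n => by
      have := havg n; linarith
    show Filter.Tendsto (avg A') Filter.atTop (nhds (nu A'))
    have hT : Filter.Tendsto (fun n => avg A n - avg F n) Filter.atTop (nhds (nu A - 0)) :=
      Filter.Tendsto.sub hAF hnull
    rw [hfun]
    have : nu A' = nu A - 0 := by
      simp [nu, heq, hαdef]
    rw [this]
    exact hT
end
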